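/- arXiv:math/0604320 — 3 statements merged into one kernel-verified Lean document; each statement's English description precedes it below -/
import Mathlib

section
/- Let L be a full-rank lattice and let L_i be the sublattice generated by the i-th connected component of the graph of length-indecomposable vectors (adjacency: nonzero inner product). Then each L_i is indecomposable, i.e., L_i cannot be written as an orthogonal direct sum of two nonzero sublattices. -/
open Submodule
open scoped RealInnerProductSpace

noncomputable section

/-- A full-rank lattice in `d`-dimensional Euclidean space: the `ℤ`-span of an `ℝ`-basis. -/
def IsFullLattice (d : ℕ) (L : Submodule ℤ (EuclideanSpace ℝ (Fin d))) : Prop :=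
  ∃ b : Module.Basis (Fin d) ℝ (EuclideanSpace ℝ (Fin d)), L = Submodule.span ℤ (Set.range b)

/-- `v` is length decomposable in `L`: `v = x + y` with `x, y ∈ L` nonzero and
`‖x‖ ≤ ‖v‖`, `‖y‖ ≤ ‖v‖`. -/
def LengthDecomposable {E : Type*} [NormedAddCommGroup E] [InnerProductSpace ℝ E]
    (L : Submodule ℤ E) (v : E) : Prop :=
  ∃ x y : E, x ∈ L ∧ y ∈ L ∧ x ≠ 0 ∧ y ≠ 0 ∧ v = x + y ∧ ‖x‖ ≤ ‖v‖ ∧ ‖y‖ ≤ ‖v‖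

/-- The set of length-indecomposable vectors of a lattice `L`. -/
def indecompSet {E : Type*} [NormedAddCommGroup E] [InnerProductSpace ℝ E]
    (L : Submodule ℤ E) : Set E :=
  {v | v ∈ L ∧ v ≠ 0 ∧ ¬LengthDecomposable L v}

/-- The graph on the length-indecomposable vectors of `L`, where two distinct vectors are
adjacent iff their inner product is nonzero. -/
def indecompGraph {E : Type*} [NormedAddCommGroup E] [InnerProductSpace ℝ E]
    (L : Submodule ℤ E) : SimpleGraph (indecompSet L) where
  Adj v w := v ≠ w ∧ ⟪(v : E), (w : E)⟫ ≠ 0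
  symm := by
    constructor
    intro v w h
    exact ⟨h.1.symm, fun hz => h.2 (by rwa [real_inner_comm])⟩
  loopless := by constructor; intro v h; exact h.1 rfl

/-- The sublattice of `L` generated by the vertex set of a connected component of the graph of
length-indecomposable vectors. -/
def componentLattice {E : Type*} [NormedAddCommGroup E] [InnerProductSpace ℝ E]
    (L : Submodule ℤ E) (c : (indecompGraph L).ConnectedComponent) : Submodule ℤ E :=
  Submodule.span ℤ (Subtype.val '' {v : indecompSet L | (indecompGraph L).connectedComponentMk v = c})


/-- A lattice `M` is decomposable if it is the orthogonal direct sum of two nonzero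
sublattices. -/
def Decomposable {E : Type*} [NormedAddCommGroup E] [InnerProductSpace ℝ E]
    (M : Submodule ℤ E) : Prop :=
  ∃ M₁ M₂ : Submodule ℤ E, M₁ ≠ ⊥ ∧ M₂ ≠ ⊥ ∧ M₁ ⊔ M₂ = M ∧
    ∀ x ∈ M₁, ∀ y ∈ M₂, ⟪x, y⟫ = 0

/-!
If `M₁ ⊔ M₂` is an orthogonal splitting of a sublattice of `L` and `v ∈ M₁ ⊔ M₂` is written as
`x + y` with `x ∈ M₁`, `y ∈ M₂`, then by Pythagoras `‖x‖, ‖y‖ ≤ ‖v‖`; so a length-indecomposable `v`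
lies entirely in `M₁` or in `M₂`. Adjacent vertices of the graph are not orthogonal, so they cannot
be split between `M₁` and `M₂`, and by connectedness a whole component lies on one side. Hence the
component lattice is contained in `M₁` (say), and then `M₂`, being orthogonal to itself, is zero.
-/

section

variable {E : Type*} [NormedAddCommGroup E] [InnerProductSpace ℝ E]

theorem norm_le_norm_add_of_inner_eq_zero {x y : E} (h : ⟪x, y⟫ = 0) : ‖x‖ ≤ ‖x + y‖ := by
  rw [mul_self_le_mul_self_iff (norm_nonneg _) (norm_nonneg _),
    norm_add_sq_eq_norm_sq_add_norm_sq_real h]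
  exact le_add_of_nonneg_right (mul_self_nonneg _)

theorem mem_or_mem_of_not_lengthDecomposable {L M₁ M₂ : Submodule ℤ E} (hle : M₁ ⊔ M₂ ≤ L)
    (horth : ∀ x ∈ M₁, ∀ y ∈ M₂, ⟪x, y⟫ = 0) {v : E} (hv : v ∈ M₁ ⊔ M₂)
    (hvd : ¬LengthDecomposable L v) : v ∈ M₁ ∨ v ∈ M₂ := by
  obtain ⟨x, hx, y, hy, rfl⟩ := mem_sup.mp hv
  by_cases hx0 : x = 0
  · simpa [hx0] using Or.inr hy
  by_cases hy0 : y = 0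
  · simpa [hy0] using Or.inl hx
  have hxy := horth x hx y hy
  refine absurd ⟨x, y, hle (mem_sup_left hx), hle (mem_sup_right hy), hx0, hy0, rfl,
    norm_le_norm_add_of_inner_eq_zero hxy, ?_⟩ hvd
  rw [add_comm]
  exact norm_le_norm_add_of_inner_eq_zero (inner_eq_zero_symm.mp hxy)

theorem eq_bot_of_le_of_inner_eq_zero {M₁ M₂ : Submodule ℤ E} (hle : M₂ ≤ M₁)
    (horth : ∀ x ∈ M₁, ∀ y ∈ M₂, ⟪x, y⟫ = 0) : M₂ = ⊥ :=
  (Submodule.eq_bot_iff M₂).mpr fun y hy => inner_self_eq_zero.mp (horth y (hle hy) y hy)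

variable {L : Submodule ℤ E} {c : (indecompGraph L).ConnectedComponent}

theorem componentLattice_le (c : (indecompGraph L).ConnectedComponent) :
    componentLattice L c ≤ L :=
  span_le.mpr <| by
    rintro _ ⟨v, -, rfl⟩
    exact v.2.1

theorem mem_componentLattice {v : indecompSet L} (hv : (indecompGraph L).connectedComponentMk v = c) :
    (v : E) ∈ componentLattice L c :=
  subset_span ⟨v, hv, rfl⟩

theorem componentLattice_le_of_orthogonal_sup {M₁ M₂ : Submodule ℤ E}
    (hsup : M₁ ⊔ M₂ = componentLattice L c) (horth : ∀ x ∈ M₁, ∀ y ∈ M₂, ⟪x, y⟫ = 0)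
    {w : indecompSet L} (hw : (indecompGraph L).connectedComponentMk w = c) (hwM : (w : E) ∈ M₁) :
    componentLattice L c ≤ M₁ := by
  have hsplit : ∀ v : indecompSet L, (indecompGraph L).connectedComponentMk v = c →
      (v : E) ∈ M₁ ∨ (v : E) ∈ M₂ := fun v hv =>
    mem_or_mem_of_not_lengthDecomposable (hsup ▸ componentLattice_le c) horth
      (hsup ▸ mem_componentLattice hv) v.2.2.2
  have hreach : ∀ v, Relation.ReflTransGen (indecompGraph L).Adj w v → (v : E) ∈ M₁ := by
    intro v hwv
    induction hwv with
    | refl => exact hwM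
    | @tail u v hwu hadj hu =>
      have hv : (indecompGraph L).connectedComponentMk v = c :=
        hw ▸ (SimpleGraph.ConnectedComponent.sound
          ((SimpleGraph.reachable_iff_reflTransGen w v).mpr (hwu.tail hadj))).symm
      exact (hsplit v hv).resolve_right fun hvM => hadj.2 (horth _ hu _ hvM)
  refine span_le.mpr ?_
  rintro _ ⟨v, hv, rfl⟩
  exact hreach v <| (SimpleGraph.reachable_iff_reflTransGen w v).mp <|
    SimpleGraph.ConnectedComponent.exact (hw.trans hv.symm)

end

theorem componentLattice_indecomposable_general
    (d : ℕ) (L : Submodule ℤ (EuclideanSpace ℝ (Fin d)))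
    (c : (indecompGraph L).ConnectedComponent) :
    ¬Decomposable (componentLattice L c) := by
  rintro ⟨M₁, M₂, h₁, h₂, hsup, horth⟩
  have horth' : ∀ y ∈ M₂, ∀ x ∈ M₁, ⟪y, x⟫ = 0 := fun y hy x hx =>
    inner_eq_zero_symm.mp (horth x hx y hy)
  obtain ⟨w, hw⟩ := c.exists_rep
  rcases mem_or_mem_of_not_lengthDecomposable (hsup ▸ componentLattice_le c) horth
    (hsup ▸ mem_componentLattice hw) w.2.2.2 with hw₁ | hw₂
  · have hle := componentLattice_le_of_orthogonal_sup hsup horth hw hw₁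
    exact h₂ (eq_bot_of_le_of_inner_eq_zero (hsup ▸ le_sup_right |>.trans hle) horth)
  · have hle := componentLattice_le_of_orthogonal_sup (sup_comm M₁ M₂ ▸ hsup) horth' hw hw₂
    exact h₁ (eq_bot_of_le_of_inner_eq_zero (hsup ▸ le_sup_left |>.trans hle) horth')

/-- For a full-rank lattice `L`, the sublattice generated by a connected component of the
graph of length-indecomposable vectors is indecomposable. -/
theorem componentLattice_indecomposable
    (d : ℕ) (L : Submodule ℤ (EuclideanSpace ℝ (Fin d))) (hL : IsFullLattice d L)
    (c : (indecompGraph L).ConnectedComponent) :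
    ¬Decomposable (componentLattice L c) :=
  componentLattice_indecomposable_general d L c
end
end

section
/- The orthogonal decomposition of a full-rank lattice L into indecomposable pairwise orthogonal sublattices is unique up to the order of the summands: if L = L₁ ⊥ ... ⊥ L_r = M₁ ⊥ ... ⊥ M_s with all L_i and M_j indecomposable and nonzero, then r = s and the multisets {L_i} and {M_j} coincide. -/
open Submodule
open scoped RealInnerProductSpace

noncomputable section

/-!
Because `L` is discrete, induction on `‖x‖²` shows that `L` is spanned by its indecomposable
vectors, the nonzero vectors that are not a sum of two nonzero orthogonal lattice vectors.
An indecomposable vector lies in a single summand of any orthogonal decomposition. Hence an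
indecomposable summand, being spanned by the indecomposable vectors it contains, lies inside a
single summand of the other decomposition; by symmetry, and since distinct nonzero summands are
never nested, this matching is a bijection.
-/

lemma exists_pos_forall_le_norm {E : Type*} [NormedAddCommGroup E] (L : Submodule ℤ E)
    [DiscreteTopology L] : ∃ ε > 0, ∀ v ∈ L, v ≠ 0 → ε ≤ ‖v‖ := by
  obtain ⟨ε, hε, hball⟩ := Metric.isOpen_iff.mp (isOpen_discrete ({0} : Set L)) 0 rfl
  refine ⟨ε, hε, fun v hv hv0 => not_lt.mp fun hlt => hv0 ?_⟩
  exact congrArg Subtype.val (hball (a := ⟨v, hv⟩) (by simpa using hlt))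

section

variable {E : Type*} [NormedAddCommGroup E] [InnerProductSpace ℝ E]

lemma inner_eq_zero_of_mem_span_of_mem_span {s t : Set E} (h : ∀ u ∈ s, ∀ v ∈ t, ⟪u, v⟫ = 0)
    {x y : E} (hx : x ∈ span ℤ s) (hy : y ∈ span ℤ t) : ⟪x, y⟫ = 0 :=
  (isOrtho_span (𝕜 := ℝ).mpr fun _ hu _ hv => h _ hu _ hv).inner_eq
    (span_le_restrictScalars ℤ ℝ s hx) (span_le_restrictScalars ℤ ℝ t hy)

def IsIndecomposableVector (L : Submodule ℤ E) (x : E) : Prop :=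
  x ∈ L ∧ x ≠ 0 ∧ ∀ y ∈ L, ∀ z ∈ L, y ≠ 0 → z ≠ 0 → ⟪y, z⟫ = 0 → y + z ≠ x

lemma mem_span_isIndecomposableVector_of_norm_sq_le {L : Submodule ℤ E} {ε : ℝ} (hε : 0 < ε)
    (hmin : ∀ v ∈ L, v ≠ 0 → ε ≤ ‖v‖) (n : ℕ) :
    ∀ x ∈ L, ‖x‖ ^ 2 ≤ n * ε ^ 2 → x ∈ span ℤ {x | IsIndecomposableVector L x} := by
  induction n with
  | zero =>
    intro x _ hx
    rw [Nat.cast_zero, zero_mul] at hx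
    have : ‖x‖ = 0 := by nlinarith [norm_nonneg x]
    exact norm_eq_zero.mp this ▸ zero_mem _
  | succ n ih =>
    intro x hxL hx
    by_cases hx0 : x = 0
    · exact hx0 ▸ zero_mem _
    by_cases hind : IsIndecomposableVector L x
    · exact subset_span hind
    obtain ⟨y, hy, z, hz, hy0, hz0, hyz, rfl⟩ : ∃ y ∈ L, ∃ z ∈ L, y ≠ 0 ∧ z ≠ 0 ∧ ⟪y, z⟫ = 0 ∧
        y + z = x := by
      simpa [IsIndecomposableVector, hxL, hx0] using hind
    have hpyth : ‖y + z‖ ^ 2 = ‖y‖ ^ 2 + ‖z‖ ^ 2 := by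
      rw [norm_add_sq_real, hyz]; ring
    have hyε := pow_le_pow_left₀ hε.le (hmin y hy hy0) 2
    have hzε := pow_le_pow_left₀ hε.le (hmin z hz hz0) 2
    push_cast at hx
    exact add_mem (ih y hy (by linarith)) (ih z hz (by linarith))

lemma le_span_isIndecomposableVector (L : Submodule ℤ E) [DiscreteTopology L] :
    L ≤ span ℤ {x | IsIndecomposableVector L x} := by
  obtain ⟨ε, hε, hmin⟩ := exists_pos_forall_le_norm L
  intro x hx
  refine mem_span_isIndecomposableVector_of_norm_sq_le hε hmin ⌈‖x‖ ^ 2 / ε ^ 2⌉₊ x hx ?_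
  rw [← div_le_iff₀ (by positivity)]
  exact Nat.le_ceil _

structure IsOrthogonalDecomposition {ι : Type*} (L : Submodule ℤ E) (N : ι → Submodule ℤ E) :
    Prop where
  iSup_eq : ⨆ i, N i = L
  inner_eq_zero : ∀ i j, i ≠ j → ∀ x ∈ N i, ∀ y ∈ N j, ⟪x, y⟫ = 0

namespace IsOrthogonalDecomposition

variable {ι κ : Type*} {L : Submodule ℤ E} {N : ι → Submodule ℤ E} {M : κ → Submodule ℤ E}

lemma le (hN : IsOrthogonalDecomposition L N) (i : ι) : N i ≤ L :=
  hN.iSup_eq ▸ le_iSup N i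

lemma inner_finsuppSum (hN : IsOrthogonalDecomposition L N) {f : ι →₀ E}
    (hf : ∀ j, f j ∈ N j) {i : ι} {y : E} (hy : y ∈ N i) :
    ⟪y, f.sum fun _ v => v⟫ = ⟪y, f i⟫ := by
  rw [Finsupp.sum, inner_sum]
  refine Finset.sum_eq_single i (fun j _ hji => hN.inner_eq_zero i j hji.symm y hy _ (hf j)) ?_
  intro hi
  rw [Finsupp.notMem_support_iff.mp hi, inner_zero_right]

lemma mem_of_mem_iSup (hN : IsOrthogonalDecomposition L N) {P : ι → Submodule ℤ E}
    (hP : ∀ j, P j ≤ N j) {i : ι} {x : E} (hxi : x ∈ N i) (hx : x ∈ ⨆ j, P j) : x ∈ P i := by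
  obtain ⟨g, hg, rfl⟩ := (mem_iSup_iff_exists_finsupp _ _).mp hx
  set u := (g.sum fun _ v => v) - g i
  have hu : u ∈ N i := sub_mem hxi (hP i (hg i))
  have : ⟪u, u⟫ = 0 := by
    rw [inner_sub_right, hN.inner_finsuppSum (fun j => hP j (hg j)) hu, sub_self]
  rw [sub_eq_zero.mp (inner_self_eq_zero.mp this)]
  exact hg i

lemma exists_mem_of_isIndecomposableVector (hN : IsOrthogonalDecomposition L N) {x : E}
    (hx : IsIndecomposableVector L x) : ∃ i, x ∈ N i := by
  obtain ⟨hxL, hx0, hxind⟩ := hx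
  obtain ⟨f, hf, rfl⟩ := (mem_iSup_iff_exists_finsupp _ _).mp (hN.iSup_eq ▸ hxL)
  obtain ⟨i, hi⟩ : ∃ i, f i ≠ 0 := by
    by_contra! hf0
    exact hx0 (Finset.sum_eq_zero fun i _ => hf0 i)
  refine ⟨i, ?_⟩
  by_contra hne
  refine hxind (f i) (hN.le i (hf i)) _ (sub_mem hxL (hN.le i (hf i))) hi
    (sub_ne_zero_of_ne fun h => hne (h ▸ hf i)) ?_ (add_sub_cancel _ _)
  rw [inner_sub_right, hN.inner_finsuppSum hf (hf i), sub_self]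

lemma span_isIndecomposableVector_inter_eq (hN : IsOrthogonalDecomposition L N)
    (hL : L ≤ span ℤ {x | IsIndecomposableVector L x}) (i : ι) :
    span ℤ ({x | IsIndecomposableVector L x} ∩ N i) = N i := by
  refine le_antisymm (span_le.mpr Set.inter_subset_right) fun x hx => ?_
  refine hN.mem_of_mem_iSup (fun j => span_le.mpr Set.inter_subset_right) hx ?_
  rw [← span_iUnion]
  refine span_mono (fun v hv => ?_) (hL (hN.le i hx))
  obtain ⟨j, hj⟩ := hN.exists_mem_of_isIndecomposableVector hv
  exact Set.mem_iUnion.mpr ⟨j, hv, hj⟩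

/-- Otherwise the indecomposable vectors of `N i` lying in `M j` and those outside it would span
an orthogonal splitting of `N i`. -/
lemma exists_le_of_not_decomposable (hN : IsOrthogonalDecomposition L N)
    (hM : IsOrthogonalDecomposition L M) (hL : L ≤ span ℤ {x | IsIndecomposableVector L x})
    {i : ι} (hne : N i ≠ ⊥) (hind : ¬Decomposable (N i)) : ∃ j, N i ≤ M j := by
  set C := {x | IsIndecomposableVector L x} ∩ (N i : Set E)
  have hC : span ℤ C = N i := hN.span_isIndecomposableVector_inter_eq hL i
  obtain ⟨v, hv⟩ : C.Nonempty := by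
    by_contra! hC0
    exact hne (by rw [← hC, hC0, span_empty])
  obtain ⟨j, hj⟩ := hM.exists_mem_of_isIndecomposableVector hv.1
  refine ⟨j, hC ▸ span_le.mpr fun w hw => ?_⟩
  by_contra hwj
  have span_ne_bot {u : E} (hu : u ∈ C) {S : Set E} (huS : u ∈ S) : span ℤ S ≠ ⊥ :=
    fun h => hu.1.2.1 ((mem_bot ℤ).mp (h ▸ subset_span huS))
  refine hind ⟨span ℤ (C ∩ M j), span ℤ (C \ M j), span_ne_bot hv ⟨hv, hj⟩,
    span_ne_bot hw ⟨hw, hwj⟩, by rw [← span_union, Set.inter_union_sdiff, hC], ?_⟩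
  refine fun x hx y hy => inner_eq_zero_of_mem_span_of_mem_span ?_ hx hy
  rintro a ⟨_, ha⟩ b ⟨hb, hbj⟩
  obtain ⟨j', hj'⟩ := hM.exists_mem_of_isIndecomposableVector hb.1
  exact hM.inner_eq_zero j j' (fun h => hbj (h ▸ hj')) a ha b hj'

lemma eq_of_le (hN : IsOrthogonalDecomposition L N) {i i' : ι} (hi : N i ≠ ⊥)
    (h : N i ≤ N i') : i = i' := by
  by_contra hii'
  refine hi (eq_bot_iff.mpr fun x hx => (mem_bot ℤ).mpr ?_)
  exact inner_self_eq_zero.mp (hN.inner_eq_zero i i' hii' x hx x (h hx))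

theorem exists_equiv_of_not_decomposable [DiscreteTopology L]
    (hN : IsOrthogonalDecomposition L N) (hM : IsOrthogonalDecomposition L M)
    (hNne : ∀ i, N i ≠ ⊥) (hMne : ∀ j, M j ≠ ⊥)
    (hNind : ∀ i, ¬Decomposable (N i)) (hMind : ∀ j, ¬Decomposable (M j)) :
    ∃ e : ι ≃ κ, ∀ i, N i = M (e i) := by
  have hL := le_span_isIndecomposableVector L
  choose σ hσ using fun i => hN.exists_le_of_not_decomposable hM hL (hNne i) (hNind i)
  choose τ hτ using fun j => hM.exists_le_of_not_decomposable hN hL (hMne j) (hMind j)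
  have hτσ : ∀ i, τ (σ i) = i := fun i => (hN.eq_of_le (hNne i) ((hσ i).trans (hτ _))).symm
  have hστ : ∀ j, σ (τ j) = j := fun j => (hM.eq_of_le (hMne j) ((hτ j).trans (hσ _))).symm
  refine ⟨⟨σ, τ, hτσ, hστ⟩, fun i => (hσ i).antisymm ?_⟩
  simpa only [hτσ] using hτ (σ i)

end IsOrthogonalDecomposition

end

theorem orthogonal_decomposition_unique_general
    (d : ℕ) (L : Submodule ℤ (EuclideanSpace ℝ (Fin d))) (hL : IsFullLattice d L)
    (r s : ℕ)
    (Li : Fin r → Submodule ℤ (EuclideanSpace ℝ (Fin d)))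
    (Mi : Fin s → Submodule ℤ (EuclideanSpace ℝ (Fin d)))
    (hLsum : ⨆ i, Li i = L) (hMsum : ⨆ j, Mi j = L)
    (hLorth : ∀ i j, i ≠ j → ∀ x ∈ Li i, ∀ y ∈ Li j, ⟪x, y⟫ = 0)
    (hMorth : ∀ i j, i ≠ j → ∀ x ∈ Mi i, ∀ y ∈ Mi j, ⟪x, y⟫ = 0)
    (hLne : ∀ i, Li i ≠ ⊥) (hMne : ∀ j, Mi j ≠ ⊥)
    (hLind : ∀ i, ¬Decomposable (Li i)) (hMind : ∀ j, ¬Decomposable (Mi j)) :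
    r = s ∧ ∃ e : Fin r ≃ Fin s, ∀ i, Li i = Mi (e i) := by
  obtain ⟨b, rfl⟩ := hL
  obtain ⟨e, he⟩ := IsOrthogonalDecomposition.exists_equiv_of_not_decomposable
    ⟨hLsum, hLorth⟩ ⟨hMsum, hMorth⟩ hLne hMne hLind hMind
  exact ⟨Fin.equiv_iff_eq.mp ⟨e⟩, e, he⟩

/-- Eichler's uniqueness theorem: the orthogonal decomposition of a full-rank lattice into
indecomposable pairwise orthogonal nonzero sublattices is unique up to the order of the
summands. -/
theorem orthogonal_decomposition_unique
    (d : ℕ) (L : Submodule ℤ (EuclideanSpace ℝ (Fin d))) (hL : IsFullLattice d L)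
    (r s : ℕ)
    (Li : Fin r → Submodule ℤ (EuclideanSpace ℝ (Fin d)))
    (Mi : Fin s → Submodule ℤ (EuclideanSpace ℝ (Fin d)))
    (hLle : ∀ i, Li i ≤ L) (hMle : ∀ j, Mi j ≤ L)
    (hLsum : ⨆ i, Li i = L) (hMsum : ⨆ j, Mi j = L)
    (hLorth : ∀ i j, i ≠ j → ∀ x ∈ Li i, ∀ y ∈ Li j, ⟪x, y⟫ = 0)
    (hMorth : ∀ i j, i ≠ j → ∀ x ∈ Mi i, ∀ y ∈ Mi j, ⟪x, y⟫ = 0)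
    (hLne : ∀ i, Li i ≠ ⊥) (hMne : ∀ j, Mi j ≠ ⊥)
    (hLind : ∀ i, ¬Decomposable (Li i)) (hMind : ∀ j, ¬Decomposable (Mi j)) :
    r = s ∧ ∃ e : Fin r ≃ Fin s, ∀ i, Li i = Mi (e i) :=
  orthogonal_decomposition_unique_general d L hL r s Li Mi hLsum hMsum hLorth hMorth hLne hMne hLind
    hMind
end
end

section
/- Let L be a full-rank lattice in a d-dimensional Euclidean space and let v_1, ..., v_m generate L with max_i ‖v_i‖ = B. Then [L : L'] ≤ d! · (B/λ₁(L))^d · vol(B_d)^{-1} · vol(B_d) holds in the form vol(L')/vol(L) ≤ d!(B/λ₁(L))^d, where L' is any full-rank sublattice of L generated by d of the vectors v_i. -/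
open Submodule MeasureTheory

noncomputable section

/-- The first successive minimum of a lattice: the infimum of the norms of its
nonzero vectors. -/
def firstMin {E : Type*} [NormedAddCommGroup E] [InnerProductSpace ℝ E]
    (L : Submodule ℤ E) : ℝ :=
  sInf ((fun x => ‖x‖) '' {x : E | x ∈ L ∧ x ≠ 0})

set_option maxHeartbeats 1000000

lemma nat_pow_le_factorial_sq (d : ℕ) : d ^ d ≤ d.factorial ^ 2 := by
  have h1 : (∏ i ∈ Finset.range d, (i + 1)) = d.factorial :=
    Finset.prod_range_add_one_eq_factorial d
  have h2 : (∏ i ∈ Finset.range d, (d - i)) = d.factorial := by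
    rw [← h1, ← Finset.prod_range_reflect]
    refine Finset.prod_congr rfl fun i hi => ?_
    rw [Finset.mem_range] at hi
    omega
  calc d ^ d = ∏ _i ∈ Finset.range d, d := by rw [Finset.prod_const, Finset.card_range]
    _ ≤ ∏ i ∈ Finset.range d, (i + 1) * (d - i) := by
        refine Finset.prod_le_prod' fun i hi => ?_
        rw [Finset.mem_range] at hi
        have h3 : 1 ≤ d - i := by omega
        calc d = i + (d - i) := by omega
          _ ≤ i * (d - i) + (d - i) := by nlinarith
          _ = (i + 1) * (d - i) := by ring
    _ = d.factorial ^ 2 := by rw [Finset.prod_mul_distrib, h1, h2, sq]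

lemma sqrt_pow_le_factorial (d : ℕ) : Real.sqrt d ^ d ≤ d.factorial := by
  have h0 : (0:ℝ) ≤ Real.sqrt d ^ d := by positivity
  have h1 : (0:ℝ) ≤ d.factorial := by positivity
  rw [← pow_le_pow_iff_left₀ h0 h1 (two_ne_zero)]
  calc (Real.sqrt d ^ d) ^ 2 = (Real.sqrt d ^ 2) ^ d := by ring
    _ = (d : ℝ) ^ d := by rw [Real.sq_sqrt (Nat.cast_nonneg d)]
    _ ≤ ((d.factorial : ℝ)) ^ 2 := by exact_mod_cast nat_pow_le_factorial_sq d

lemma covolume_lower (d : ℕ) (hd : 0 < d) (L : Submodule ℤ (EuclideanSpace ℝ (Fin d)))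
    [DiscreteTopology L] [IsZLattice ℝ L] {lam : ℝ} (hlam : 0 < lam)
    (hmin : ∀ x ∈ L, x ≠ 0 → lam ≤ ‖x‖) :
    (lam / Real.sqrt d) ^ d ≤ ZLattice.covolume L := by
  set c : ℝ := lam / Real.sqrt d with hc
  have hsd : (0:ℝ) < Real.sqrt d := Real.sqrt_pos.2 (by exact_mod_cast hd)
  have hc0 : 0 < c := div_pos hlam hsd
  by_contra hlt
  push_neg at hlt
  set b := Module.Free.chooseBasis ℤ L with hb
  have fund := ZLattice.isAddFundamentalDomain b (volume : Measure (EuclideanSpace ℝ (Fin d)))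
  set F := ZSpan.fundamentalDomain (b.ofZLatticeBasis ℝ) with hF
  have hFvol : volume F ≠ ⊤ :=
    (Bornology.IsBounded.measure_lt_top (ZSpan.fundamentalDomain_isBounded _)).ne
  have hFeq : ZLattice.covolume L = (volume F).toReal :=
    ZLattice.covolume_eq_measure_fundamentalDomain L volume fund
  set S : Set (EuclideanSpace ℝ (Fin d)) := {x | ∀ i, |x i| < c} with hS
  have hSeq : S = (⇑(WithLp.equiv 2 (Fin d → ℝ))) ⁻¹' (Set.univ.pi fun _ => Set.Ioo (-c) c) := by
    ext x
    simp [hS, Set.mem_pi, abs_lt, and_comm]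
  have hS_symm : ∀ x ∈ S, -x ∈ S := by
    intro x hx i
    simpa using hx i
  have hS_conv : Convex ℝ S := by
    intro x hx y hy a b' ha hb' hab
    intro i
    have hxi := hx i
    have hyi := hy i
    have h1 : (a • x + b' • y) i = a * x i + b' * y i := by
      simp [PiLp.add_apply, PiLp.smul_apply, smul_eq_mul]
    rw [h1]
    calc |a * x i + b' * y i| ≤ |a * x i| + |b' * y i| := abs_add_le _ _
      _ = a * |x i| + b' * |y i| := by
          rw [abs_mul, abs_mul, abs_of_nonneg ha, abs_of_nonneg hb']
      _ < a * c + b' * c := by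
          rcases eq_or_lt_of_le ha with h | h
          · rcases eq_or_lt_of_le hb' with h2 | h2
            · exfalso; rw [← h, ← h2] at hab; norm_num at hab
            · rw [← h]; simpa using (mul_lt_mul_of_pos_left hyi h2)
          · rcases eq_or_lt_of_le hb' with h2 | h2
            · rw [← h2]; simpa using (mul_lt_mul_of_pos_left hxi h)
            · exact add_lt_add (mul_lt_mul_of_pos_left hxi h) (mul_lt_mul_of_pos_left hyi h2)
      _ = c := by rw [← add_mul, hab, one_mul]
  have hvolS : volume S = ENNReal.ofReal ((2 * c) ^ d) := by
    rw [hSeq, show ⇑(WithLp.equiv 2 (Fin d → ℝ)) = WithLp.ofLp from rfl,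
      (PiLp.volume_preserving_ofLp (Fin d)).measure_preimage
      ((MeasurableSet.univ_pi fun _ => measurableSet_Ioo).nullMeasurableSet)]
    rw [volume_pi_pi]
    simp only [Real.volume_Ioo, sub_neg_eq_add]
    rw [Finset.prod_const, Finset.card_univ, Fintype.card_fin,
      ← ENNReal.ofReal_pow (by positivity : (0:ℝ) ≤ c + c)]
    congr 1
    ring
  have hlt2 : volume F * 2 ^ Module.finrank ℝ (EuclideanSpace ℝ (Fin d)) < volume S := by
    rw [finrank_euclideanSpace_fin, hvolS, ← ENNReal.ofReal_toReal hFvol, ← hFeq]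
    calc ENNReal.ofReal (ZLattice.covolume L) * 2 ^ d
        = ENNReal.ofReal (ZLattice.covolume L * 2 ^ d) := by
          rw [ENNReal.ofReal_mul (ZLattice.covolume_pos L volume).le]
          congr 1
          rw [ENNReal.ofReal_pow (by norm_num)]
          norm_num
      _ < ENNReal.ofReal ((2 * c) ^ d) := by
          rw [ENNReal.ofReal_lt_ofReal_iff (by positivity)]
          calc ZLattice.covolume L * 2 ^ d < c ^ d * 2 ^ d := by
                have := ZLattice.covolume_pos L (volume : Measure (EuclideanSpace ℝ (Fin d)))
                gcongr
            _ = (2 * c) ^ d := by ring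
  haveI : Countable L.toAddSubgroup := (inferInstance : Countable L)
  have fund' : IsAddFundamentalDomain L.toAddSubgroup F volume := fund
  obtain ⟨x, hx0, hxS⟩ :=
    exists_ne_zero_mem_lattice_of_measure_mul_two_pow_lt_measure (L := L.toAddSubgroup)
      fund' hS_symm hS_conv hlt2
  have hxL : (x : EuclideanSpace ℝ (Fin d)) ∈ L := x.2
  have hxne : (x : EuclideanSpace ℝ (Fin d)) ≠ 0 :=
    fun h => hx0 (ZeroMemClass.coe_eq_zero.mp h)
  have hnorm : ‖(x : EuclideanSpace ℝ (Fin d))‖ < lam := by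
    rw [EuclideanSpace.norm_eq]
    rw [show ∀ y : ℝ, Real.sqrt y < lam ↔ y < lam ^ 2 from fun y => Real.sqrt_lt' hlam]
    calc ∑ i, ‖(x : EuclideanSpace ℝ (Fin d)) i‖ ^ 2 < ∑ _i : Fin d, c ^ 2 := by
          haveI : Nonempty (Fin d) := Fin.pos_iff_nonempty.mp hd
          refine Finset.sum_lt_sum_of_nonempty Finset.univ_nonempty fun i _ => ?_
          have h := hxS i
          rw [Real.norm_eq_abs]
          exact sq_lt_sq' (by linarith [abs_nonneg ((x : EuclideanSpace ℝ (Fin d)) i)]) h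
      _ = d * c ^ 2 := by rw [Finset.sum_const, Finset.card_univ, Fintype.card_fin]; ring
      _ = lam ^ 2 := by
          rw [hc, div_pow, Real.sq_sqrt (Nat.cast_nonneg d)]
          field_simp
  exact absurd (hmin _ hxL hxne) (not_le.mpr hnorm)

lemma covolume_upper (d : ℕ) (w : Fin d → EuclideanSpace ℝ (Fin d))
    (L' : Submodule ℤ (EuclideanSpace ℝ (Fin d))) [DiscreteTopology L'] [IsZLattice ℝ L']
    (hL' : L' = span ℤ (Set.range w)) {B : ℝ} (hw : ∀ i, ‖w i‖ ≤ B) :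
    ZLattice.covolume L' ≤ B ^ d := by
  classical
  have hspan : span ℝ (Set.range w) = ⊤ := by
    have h1 : span ℝ (L' : Set (EuclideanSpace ℝ (Fin d))) = ⊤ := IsZLattice.span_top
    rw [hL'] at h1
    rwa [span_span_of_tower] at h1
  have hcard : Module.finrank ℝ (EuclideanSpace ℝ (Fin d)) = Fintype.card (Fin d) := by
    simp [finrank_euclideanSpace_fin]
  have hw_li : LinearIndependent ℝ w :=
    linearIndependent_of_top_le_span_of_card_eq_finrank (hspan ▸ le_rfl)
      (by simp [finrank_euclideanSpace_fin])
  have hw_liZ : LinearIndependent ℤ w := by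
    refine hw_li.restrict_scalars ?_
    intro a b h
    have : ((a : ℝ)) = (b : ℝ) := by simpa [zsmul_eq_mul] using h
    exact_mod_cast this
  let bZ : Module.Basis (Fin d) ℤ (span ℤ (Set.range w)) := Module.Basis.span hw_liZ
  let bL' : Module.Basis (Fin d) ℤ L' := bZ.map (LinearEquiv.ofEq _ _ hL'.symm)
  let o : OrthonormalBasis (Fin d) ℝ (EuclideanSpace ℝ (Fin d)) :=
    @InnerProductSpace.gramSchmidtOrthonormalBasis ℝ _ _ _ _ (Fin d) _ _
      (inferInstance : WellFoundedLT (Fin d)) _ _ hcard w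
  have hcoe : ((↑) ∘ bL' : Fin d → EuclideanSpace ℝ (Fin d)) = w := by
    funext i
    show ((bZ.map (LinearEquiv.ofEq _ _ hL'.symm)) i : EuclideanSpace ℝ (Fin d)) = w i
    rw [Module.Basis.map_apply, LinearEquiv.coe_ofEq_apply]
    exact congrArg Subtype.val (Module.Basis.span_apply hw_liZ i)
  have h1 : ZLattice.covolume L' = |o.toBasis.det ((↑) ∘ bL')| := by
    rw [ZLattice.covolume_eq_det_mul_measureReal L' volume bL' o.toBasis,
      measureReal_congr (ZSpan.fundamentalDomain_ae_parallelepiped o.toBasis volume)]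
    rw [show parallelepiped ⇑o.toBasis = parallelepiped ⇑o by rw [OrthonormalBasis.coe_toBasis]]
    rw [measureReal_def, o.volume_parallelepiped]
    simp
  rw [h1, hcoe,
    @InnerProductSpace.gramSchmidtOrthonormalBasis_det ℝ _ _ _ _ (Fin d) _ _
      (inferInstance : WellFoundedLT (Fin d)) _ _ hcard w _,
    Finset.abs_prod]
  calc (∏ i, |inner (𝕜 := ℝ) (o i) (w i)|)
      ≤ ∏ _i : Fin d, B := by
        refine Finset.prod_le_prod (fun i _ => abs_nonneg _) fun i _ => ?_
        calc |inner (𝕜 := ℝ) (o i) (w i)| ≤ ‖o i‖ * ‖w i‖ := abs_real_inner_le_norm _ _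
          _ = ‖w i‖ := by rw [o.orthonormal.1 i, one_mul]
          _ ≤ B := hw i
    _ = B ^ d := by rw [Finset.prod_const, Finset.card_univ, Fintype.card_fin]

/-- If `L` is a full-rank lattice generated by `v_1, ..., v_m` with `max_i ‖v_i‖ = B` and `L'`
is a full-rank sublattice generated by `d` of the `v_i`, then
`vol(L')/vol(L) ≤ d! (B/λ₁(L))^d`. -/
theorem covolume_ratio_le
    (d m : ℕ) (v : Fin m → EuclideanSpace ℝ (Fin d))
    (L L' : Submodule ℤ (EuclideanSpace ℝ (Fin d)))
    [DiscreteTopology L] [IsZLattice ℝ L] [DiscreteTopology L'] [IsZLattice ℝ L']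
    (hL : L = Submodule.span ℤ (Set.range v))
    (B : ℝ) (hB : IsGreatest ((fun i => ‖v i‖) '' Set.univ) B)
    (s : Fin d → Fin m) (hL' : L' = Submodule.span ℤ (Set.range (v ∘ s))) :
    ZLattice.covolume L' / ZLattice.covolume L ≤
      d.factorial * (B / firstMin L) ^ d := by
  rcases Nat.eq_zero_or_pos d with hd | hd
  · subst hd
    haveI : Subsingleton (EuclideanSpace ℝ (Fin 0)) :=
      ⟨fun a b => PiLp.ext fun i => Fin.elim0 i⟩
    have hall : ∀ (N : Submodule ℤ (EuclideanSpace ℝ (Fin 0))), N = ⊤ := fun N =>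
      Submodule.eq_top_iff'.mpr fun x => by rw [Subsingleton.elim x 0]; exact N.zero_mem
    rw [show L' = L from (hall L').trans (hall L).symm,
      div_self (ZLattice.covolume_ne_zero L volume)]
    simp
  · -- positivity of the first minimum
    have hspanL : span ℝ (L : Set (EuclideanSpace ℝ (Fin d))) = ⊤ := IsZLattice.span_top
    have hex : ∃ x : EuclideanSpace ℝ (Fin d), x ∈ L ∧ x ≠ 0 := by
      by_contra h
      push_neg at h
      have hle : span ℝ (L : Set (EuclideanSpace ℝ (Fin d))) ≤ ⊥ :=
        span_le.mpr fun x hx => by simp [h x hx]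
      rw [hspanL] at hle
      have h1 : EuclideanSpace.single (⟨0, hd⟩ : Fin d) (1:ℝ) = 0 := by
        simpa using hle (mem_top (R := ℝ) (x := EuclideanSpace.single (⟨0, hd⟩ : Fin d) (1:ℝ)))
      have h2 := congrArg (fun v => v ⟨0, hd⟩) h1
      simp [PiLp.single_apply] at h2
    obtain ⟨x₀, hx₀L, hx₀⟩ := hex
    have hbdd : BddBelow ((fun x => ‖x‖) '' {x : EuclideanSpace ℝ (Fin d) | x ∈ L ∧ x ≠ 0}) :=
      ⟨0, fun y ⟨x, _, hxy⟩ => hxy ▸ norm_nonneg x⟩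
    have hne : ((fun x => ‖x‖) '' {x : EuclideanSpace ℝ (Fin d) | x ∈ L ∧ x ≠ 0}).Nonempty :=
      ⟨‖x₀‖, x₀, ⟨hx₀L, hx₀⟩, rfl⟩
    obtain ⟨ε, hε, hball⟩ : ∃ ε > 0, ∀ x ∈ L, ‖x‖ < ε → x = 0 := by
      obtain ⟨ε, hε, hsub⟩ := Metric.isOpen_iff.mp (isOpen_discrete ({0} : Set L)) 0 rfl
      refine ⟨ε, hε, fun x hx hnorm => ?_⟩
      have hmem : (⟨x, hx⟩ : L) ∈ Metric.ball (0 : L) ε := by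
        rw [Metric.mem_ball, Subtype.dist_eq]
        simpa [dist_zero_right] using hnorm
      simpa [Subtype.ext_iff] using hsub hmem
    have hlam_pos : 0 < firstMin L := by
      refine lt_of_lt_of_le hε (le_csInf hne ?_)
      rintro y ⟨x, ⟨hxL, hx0⟩, rfl⟩
      by_contra hcon
      exact hx0 (hball x hxL (lt_of_not_ge hcon))
    have hlam_le : ∀ x ∈ L, x ≠ 0 → firstMin L ≤ ‖x‖ := fun x hx h0 =>
      csInf_le hbdd ⟨x, ⟨hx, h0⟩, rfl⟩
    have hlow := covolume_lower d hd L hlam_pos hlam_le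
    have hupp := covolume_upper d (v ∘ s) L' hL'
      (fun i => hB.2 ⟨s i, Set.mem_univ _, rfl⟩)
    have hB0 : 0 ≤ B :=
      le_trans (norm_nonneg (v (s ⟨0, hd⟩))) (hB.2 ⟨s ⟨0, hd⟩, Set.mem_univ _, rfl⟩)
    have hsd : (0:ℝ) < Real.sqrt d := Real.sqrt_pos.2 (by exact_mod_cast hd)
    have hc0 : 0 < firstMin L / Real.sqrt d := div_pos hlam_pos hsd
    calc ZLattice.covolume L' / ZLattice.covolume L
        ≤ B ^ d / (firstMin L / Real.sqrt d) ^ d :=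
          div_le_div₀ (by positivity) hupp (by positivity) hlow
      _ = Real.sqrt d ^ d * (B / firstMin L) ^ d := by
          rw [← div_pow, ← mul_pow]
          congr 1
          field_simp
      _ ≤ d.factorial * (B / firstMin L) ^ d := by
          have := sqrt_pow_le_factorial d
          have h2 : (0:ℝ) ≤ (B / firstMin L) ^ d := by positivity
          exact mul_le_mul_of_nonneg_right (sqrt_pow_le_factorial d) h2
end
end
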